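/- arXiv:1210.6613 — 4 statements merged into one kernel-verified Lean document; each statement's English description precedes it below -/
import Mathlib

section
/- Let A be a densely defined symmetric operator on a Hilbert space H whose domain D is an increasing union of subspaces Sₙ such that A maps Sₙ into Sₙ₊₁ and ‖A restricted to Sₙ‖ ≤ 2n + 2 for each n. Then every vector in D is an analytic vector for A: for each φ ∈ D there exists r > 0 such that Σₙ (rⁿ/n!)‖Aⁿφ‖ < ∞. -/
/-!
Starting from `φ ∈ S_N`, the vector `Aᵏφ` lies in `S_{N+k}`, so the growth bound gives
`‖Aᵏφ‖ ≤ 2ᵏ (N+1)(N+2)⋯(N+k) ‖φ‖ = 2ᵏ k! C(N+k, k) ‖φ‖`. The factorial cancels against the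
`1/k!` of the exponential series, which is then dominated by `∑ C(N+k, k) (2r)ᵏ`, convergent for
`2r < 1`.
-/

open Function Set

section GradedGrowth

theorem iterate_mem_of_mapsTo {α : Type*} {f : α → α} {S : ℕ → Set α}
    (hmap : ∀ n, MapsTo f (S n) (S (n + 1))) {N : ℕ} {x : α}
    (hx : x ∈ S N) (k : ℕ) : f^[k] x ∈ S (N + k) := by
  induction k with
  | zero => exact hx
  | succ k ih =>
    rw [iterate_succ_apply']
    exact hmap (N + k) ih

variable {E : Type*} [SeminormedAddCommGroup E] {f : E → E} {S : ℕ → Set E} {c : ℝ}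

theorem norm_iterate_le_ascFactorial (hmap : ∀ n, MapsTo f (S n) (S (n + 1))) (hc : 0 ≤ c)
    (hbound : ∀ n, ∀ x ∈ S n, ‖f x‖ ≤ c * (n + 1) * ‖x‖) {N : ℕ} {x : E} (hx : x ∈ S N)
    (k : ℕ) : ‖f^[k] x‖ ≤ c ^ k * (N + 1).ascFactorial k * ‖x‖ := by
  induction k with
  | zero => simp
  | succ k ih =>
    rw [iterate_succ_apply', Nat.ascFactorial_succ]
    calc ‖f (f^[k] x)‖
        ≤ c * ((N + k : ℕ) + 1) * ‖f^[k] x‖ := hbound _ _ (iterate_mem_of_mapsTo hmap hx k)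
      _ ≤ c * ((N + k : ℕ) + 1) * (c ^ k * (N + 1).ascFactorial k * ‖x‖) := by gcongr
      _ = c ^ (k + 1) * ((N + 1 + k) * (N + 1).ascFactorial k : ℕ) * ‖x‖ := by
        push_cast
        ring

theorem summable_pow_div_factorial_mul_norm_iterate (hmap : ∀ n, MapsTo f (S n) (S (n + 1)))
    (hc : 0 ≤ c) (hbound : ∀ n, ∀ x ∈ S n, ‖f x‖ ≤ c * (n + 1) * ‖x‖) {N : ℕ} {x : E}
    (hx : x ∈ S N) {r : ℝ} (hr : 0 ≤ r) (hrc : r * c < 1) :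
    Summable fun k : ℕ => r ^ k / k.factorial * ‖f^[k] x‖ := by
  have hgeom : Summable fun k : ℕ => ‖x‖ * ((k + N).choose N * (r * c) ^ k) :=
    (summable_choose_mul_geometric_of_norm_lt_one (R := ℝ) N
      (by rwa [Real.norm_of_nonneg (mul_nonneg hr hc)])).mul_left _
  refine hgeom.of_nonneg_of_le (fun k => by positivity) fun k => ?_
  calc r ^ k / k.factorial * ‖f^[k] x‖
      ≤ r ^ k / k.factorial * (c ^ k * (N + 1).ascFactorial k * ‖x‖) := by
        gcongr
        exact norm_iterate_le_ascFactorial hmap hc hbound hx k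
    _ = ‖x‖ * ((k + N).choose N * (r * c) ^ k) := by
        rw [Nat.ascFactorial_eq_factorial_mul_choose, add_comm k N, ← Nat.choose_symm_add]
        push_cast
        field_simp
        ring

end GradedGrowth

theorem stmt_4_general {H : Type*} [NormedAddCommGroup H] [InnerProductSpace ℂ H]
    (D : Submodule ℂ H)
    (A : D →ₗ[ℂ] D)
    (S : ℕ → Submodule ℂ H)
    (hunion : ∀ x : H, x ∈ D ↔ ∃ n, x ∈ S n)
    (hmap : ∀ n, ∀ x : D, (x : H) ∈ S n → ((A x : D) : H) ∈ S (n + 1))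
    (hbound : ∀ n, ∀ x : D, (x : H) ∈ S n → ‖((A x : D) : H)‖ ≤ (2 * n + 2 : ℝ) * ‖(x : H)‖) :
    ∀ φ : D, ∃ r : ℝ, 0 < r ∧
      Summable (fun n : ℕ => r ^ n / (n.factorial : ℝ) * ‖(((A ^ n) φ : D) : H)‖) := by
  intro φ
  obtain ⟨N, hN⟩ := (hunion φ).mp φ.2
  have hgrowth : ∀ n, ∀ x ∈ {x : D | (x : H) ∈ S n}, ‖A x‖ ≤ 2 * (n + 1) * ‖x‖ :=
    fun n x hx => by simpa only [mul_add, mul_one, Submodule.coe_norm] using hbound n x hx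
  refine ⟨1 / 4, by norm_num, ?_⟩
  have hsum := summable_pow_div_factorial_mul_norm_iterate (fun n x hx => hmap n x hx) zero_le_two
    hgrowth (N := N) hN (r := 1 / 4) (by norm_num) (by norm_num)
  simpa only [Module.End.pow_apply, Submodule.coe_norm] using hsum

/-- Let `A` be a densely defined symmetric operator on a Hilbert space whose
domain `D` is an increasing union of subspaces `Sₙ` with `A(Sₙ) ⊆ Sₙ₊₁` and
`‖A|_{Sₙ}‖ ≤ 2n+2`. Then every vector of `D` is an analytic vector for `A`. -/
theorem stmt_4 {H : Type*} [NormedAddCommGroup H] [InnerProductSpace ℂ H] [CompleteSpace H]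
    (D : Submodule ℂ H) (hdense : Dense (D : Set H))
    (A : D →ₗ[ℂ] D)
    (hsym : ∀ x y : D, (inner ℂ ((A x : D) : H) (y : H) : ℂ) = inner ℂ (x : H) ((A y : D) : H))
    (S : ℕ → Submodule ℂ H)
    (hmono : ∀ n, S n ≤ S (n + 1))
    (hunion : ∀ x : H, x ∈ D ↔ ∃ n, x ∈ S n)
    (hmap : ∀ n, ∀ x : D, (x : H) ∈ S n → ((A x : D) : H) ∈ S (n + 1))
    (hbound : ∀ n, ∀ x : D, (x : H) ∈ S n → ‖((A x : D) : H)‖ ≤ (2 * n + 2 : ℝ) * ‖(x : H)‖) :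
    ∀ φ : D, ∃ r : ℝ, 0 < r ∧
      Summable (fun n : ℕ => r ^ n / (n.factorial : ℝ) * ‖(((A ^ n) φ : D) : H)‖) :=
  stmt_4_general D A S hunion hmap hbound
end

section
/- On an open qubit chain of length n ≥ 3, let H' = Σ_{i=1}^{n-2} h'_{i,i+1,i+2} where h' = I - |000⟩⟨000| - |111⟩⟨111| - |0+1⟩⟨0+1| - |1+0⟩⟨1+0|. Then the kernel of H' contains the four vectors |0⋯0⟩, |1⋯1⟩, Σ_{k=1}^{n-1} |0^k 1^{n-k}⟩ (sum over all positions of a single 0→1 domain wall), and Σ_{k=1}^{n-1} |1^k 0^{n-k}⟩. -/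
open Matrix

noncomputable section

def e0 : Fin 2 → ℂ := ![1, 0]
def e1 : Fin 2 → ℂ := ![0, 1]
def ePlus : Fin 2 → ℂ := ![1 / (Real.sqrt 2 : ℂ), 1 / (Real.sqrt 2 : ℂ)]

def ket3 (x y z : Fin 2 → ℂ) : Fin 2 × Fin 2 × Fin 2 → ℂ :=
  fun p => x p.1 * y p.2.1 * z p.2.2

def proj (v : Fin 2 × Fin 2 × Fin 2 → ℂ) :
    Matrix (Fin 2 × Fin 2 × Fin 2) (Fin 2 × Fin 2 × Fin 2) ℂ :=
  Matrix.vecMulVec v (star v)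

/-- `h' = I - |000⟩⟨000| - |111⟩⟨111| - |0+1⟩⟨0+1| - |1+0⟩⟨1+0|`. -/
def hGHZ : Matrix (Fin 2 × Fin 2 × Fin 2) (Fin 2 × Fin 2 × Fin 2) ℂ :=
  1 - proj (ket3 e0 e0 e0) - proj (ket3 e1 e1 e1)
    - proj (ket3 e0 ePlus e1) - proj (ket3 e1 ePlus e0)

/-- The local three-site operator `h` acting on the (open-chain) sites `i, i+1, i+2` of a
qubit chain of `n` sites; `0` when `i+2` is out of range. -/
def embedOpen {n : ℕ} (h : Matrix (Fin 2 × Fin 2 × Fin 2) (Fin 2 × Fin 2 × Fin 2) ℂ)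
    (i : ℕ) : Matrix (Fin n → Fin 2) (Fin n → Fin 2) ℂ :=
  if hi : i + 2 < n then
    fun f g =>
      (if ∀ j : Fin n, (j : ℕ) ≠ i → (j : ℕ) ≠ i + 1 → (j : ℕ) ≠ i + 2 → f j = g j
        then 1 else 0) *
      h (f ⟨i, by omega⟩, f ⟨i + 1, by omega⟩, f ⟨i + 2, hi⟩)
        (g ⟨i, by omega⟩, g ⟨i + 1, by omega⟩, g ⟨i + 2, hi⟩)
  else 0

/-- The computational basis state with configuration `c`. -/
def basisState {n : ℕ} (c : Fin n → Fin 2) : (Fin n → Fin 2) → ℂ :=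
  fun f => if f = c then 1 else 0

/-!
The local term `h'` annihilates `|000⟩` and `|111⟩`, and also `|011⟩ + |001⟩ = √2 |0+1⟩` and
`|100⟩ + |110⟩ = √2 |1+0⟩`. In the window `i, i+1, i+2`, a domain-wall configuration
`a^k b^(n-k)` reads `bbb` or `aaa` unless `k = i + 1` or `k = i + 2`, and these two walls differ
only at site `i + 1`, where they read `abb` and `aab`. Hence every local term kills the
constant states and the sum over all domain-wall positions.
-/

def window {n : ℕ} (c : Fin n → Fin 2) (i : ℕ) (hi : i + 2 < n) : Fin 2 × Fin 2 × Fin 2 :=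
  (c ⟨i, by omega⟩, c ⟨i + 1, by omega⟩, c ⟨i + 2, hi⟩)

def domainWall (n : ℕ) (a b : Fin 2) (k : ℕ) : Fin n → Fin 2 :=
  fun j => if (j : ℕ) < k then a else b

section LocalTerm

variable {n : ℕ} (h : Matrix (Fin 2 × Fin 2 × Fin 2) (Fin 2 × Fin 2 × Fin 2) ℂ)

lemma basisState_eq_single (c : Fin n → Fin 2) : basisState c = Pi.single c 1 := by
  funext f
  rw [basisState, Pi.single_apply]

lemma embedOpen_mulVec_basisState_apply {i : ℕ} (hi : i + 2 < n) (c f : Fin n → Fin 2) :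
    (embedOpen h i *ᵥ basisState c) f =
      (if ∀ j : Fin n, (j : ℕ) ≠ i → (j : ℕ) ≠ i + 1 → (j : ℕ) ≠ i + 2 → f j = c j
        then 1 else 0) * h (window f i hi) (window c i hi) := by
  rw [basisState_eq_single, mulVec_single_one, col_apply]
  exact congrArg (fun M : Matrix (Fin n → Fin 2) (Fin n → Fin 2) ℂ => M f c) (dif_pos hi)

lemma embedOpen_mulVec_basisState_eq_zero {i : ℕ} (hi : i + 2 < n) {c : Fin n → Fin 2}
    (hc : ∀ x, h x (window c i hi) = 0) : embedOpen h i *ᵥ basisState c = 0 := by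
  funext f
  rw [embedOpen_mulVec_basisState_apply h hi, hc, mul_zero, Pi.zero_apply]

lemma embedOpen_mulVec_basisState_add_eq_zero {i : ℕ} (hi : i + 2 < n) {c c' : Fin n → Fin 2}
    (hcc' : ∀ j : Fin n, (j : ℕ) ≠ i → (j : ℕ) ≠ i + 1 → (j : ℕ) ≠ i + 2 → c j = c' j)
    (hcol : ∀ x, h x (window c i hi) + h x (window c' i hi) = 0) :
    embedOpen h i *ᵥ (basisState c + basisState c') = 0 := by
  funext f
  have hagree : (∀ j : Fin n, (j : ℕ) ≠ i → (j : ℕ) ≠ i + 1 → (j : ℕ) ≠ i + 2 → f j = c j) ↔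
      (∀ j : Fin n, (j : ℕ) ≠ i → (j : ℕ) ≠ i + 1 → (j : ℕ) ≠ i + 2 → f j = c' j) :=
    forall_congr' fun j => imp_congr_right fun h0 => imp_congr_right fun h1 =>
      imp_congr_right fun h2 => by rw [hcc' j h0 h1 h2]
  rw [mulVec_add, Pi.add_apply, embedOpen_mulVec_basisState_apply h hi,
    embedOpen_mulVec_basisState_apply h hi, if_congr hagree rfl rfl, ← mul_add, hcol, mul_zero,
    Pi.zero_apply]

lemma window_domainWall (a b : Fin 2) (k : ℕ) {i : ℕ} (hi : i + 2 < n) :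
    window (domainWall n a b k) i hi =
      (if i < k then a else b, if i + 1 < k then a else b, if i + 2 < k then a else b) :=
  rfl

lemma embedOpen_mulVec_sum_domainWall_eq_zero {a b : Fin 2}
    (ha : ∀ x, h x (a, a, a) = 0) (hb : ∀ x, h x (b, b, b) = 0)
    (hab : ∀ x, h x (a, b, b) + h x (a, a, b) = 0) {i : ℕ} (hi : i + 2 < n) :
    embedOpen h i *ᵥ ∑ k ∈ Finset.Ico 1 n, basisState (domainWall n a b k) = 0 := by
  have hwalls : {i + 1, i + 2} ⊆ Finset.Ico 1 n := by
    intro k hk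
    simp only [Finset.mem_insert, Finset.mem_singleton] at hk
    rw [Finset.mem_Ico]
    omega
  have hpair : embedOpen h i *ᵥ
      (basisState (domainWall n a b (i + 1)) + basisState (domainWall n a b (i + 2))) = 0 := by
    refine embedOpen_mulVec_basisState_add_eq_zero h hi (fun j _ hj1 _ => ?_) fun x => ?_
    · simp only [domainWall]
      split_ifs <;> first | rfl | omega
    · simpa [window_domainWall] using hab x
  have hrest : ∀ k ∈ Finset.Ico 1 n \ {i + 1, i + 2},
      embedOpen h i *ᵥ basisState (domainWall n a b k) = 0 := by
    intro k hk
    simp only [Finset.mem_sdiff, Finset.mem_insert, Finset.mem_singleton] at hk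
    refine embedOpen_mulVec_basisState_eq_zero h hi fun x => ?_
    rcases (show k ≤ i ∨ i + 3 ≤ k by omega) with hki | hki
    · simpa [window_domainWall, show ¬ i < k by omega, show ¬ i + 1 < k by omega,
        show ¬ i + 2 < k by omega] using hb x
    · simpa [window_domainWall, show i < k by omega, show i + 1 < k by omega,
        show i + 2 < k by omega] using ha x
  rw [← Finset.sum_sdiff hwalls, mulVec_add, mulVec_sum, Finset.sum_pair (by omega), hpair,
    Finset.sum_eq_zero hrest, add_zero]

lemma sum_embedOpen_mulVec_eq_zero {v : (Fin n → Fin 2) → ℂ}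
    (hv : ∀ i, i + 2 < n → embedOpen h i *ᵥ v = 0) :
    (∑ i ∈ Finset.range (n - 2), embedOpen h i) *ᵥ v = 0 := by
  rw [sum_mulVec]
  refine Finset.sum_eq_zero fun i hi => hv i ?_
  have := Finset.mem_range.mp hi
  omega

end LocalTerm

lemma hGHZ_apply_000 (x : Fin 2 × Fin 2 × Fin 2) : hGHZ x (0, 0, 0) = 0 := by
  obtain ⟨a, b, c⟩ := x
  fin_cases a <;> fin_cases b <;> fin_cases c <;>
    simp [hGHZ, proj, ket3, e0, e1, ePlus, vecMulVec_apply, one_apply]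

lemma hGHZ_apply_111 (x : Fin 2 × Fin 2 × Fin 2) : hGHZ x (1, 1, 1) = 0 := by
  obtain ⟨a, b, c⟩ := x
  fin_cases a <;> fin_cases b <;> fin_cases c <;>
    simp [hGHZ, proj, ket3, e0, e1, ePlus, vecMulVec_apply, one_apply]

lemma sqrt_two_mul_sqrt_two : (Real.sqrt 2 : ℂ) * (Real.sqrt 2 : ℂ) = 2 := by
  rw [← Complex.ofReal_mul, Real.mul_self_sqrt zero_le_two, Complex.ofReal_ofNat]

lemma hGHZ_apply_011_add_apply_001 (x : Fin 2 × Fin 2 × Fin 2) :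
    hGHZ x (0, 1, 1) + hGHZ x (0, 0, 1) = 0 := by
  obtain ⟨a, b, c⟩ := x
  fin_cases a <;> fin_cases b <;> fin_cases c <;>
    simp [hGHZ, proj, ket3, e0, e1, ePlus, vecMulVec_apply, one_apply] <;>
    field_simp <;> linear_combination sqrt_two_mul_sqrt_two

lemma hGHZ_apply_100_add_apply_110 (x : Fin 2 × Fin 2 × Fin 2) :
    hGHZ x (1, 0, 0) + hGHZ x (1, 1, 0) = 0 := by
  obtain ⟨a, b, c⟩ := x
  fin_cases a <;> fin_cases b <;> fin_cases c <;>
    simp [hGHZ, proj, ket3, e0, e1, ePlus, vecMulVec_apply, one_apply] <;>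
    field_simp <;> linear_combination sqrt_two_mul_sqrt_two

theorem stmt_14_general (n : ℕ) :
    (∑ i ∈ Finset.range (n - 2), embedOpen (n := n) hGHZ i).mulVec
        (basisState (fun _ => (0 : Fin 2))) = 0 ∧
    (∑ i ∈ Finset.range (n - 2), embedOpen (n := n) hGHZ i).mulVec
        (basisState (fun _ => (1 : Fin 2))) = 0 ∧
    (∑ i ∈ Finset.range (n - 2), embedOpen (n := n) hGHZ i).mulVec
        (∑ k ∈ Finset.Ico 1 n,
          basisState (fun j => if (j : ℕ) < k then (0 : Fin 2) else 1)) = 0 ∧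
    (∑ i ∈ Finset.range (n - 2), embedOpen (n := n) hGHZ i).mulVec
        (∑ k ∈ Finset.Ico 1 n,
          basisState (fun j => if (j : ℕ) < k then (1 : Fin 2) else 0)) = 0 := by
  refine ⟨?_, ?_, ?_, ?_⟩ <;> refine sum_embedOpen_mulVec_eq_zero hGHZ fun i hi => ?_
  · exact embedOpen_mulVec_basisState_eq_zero hGHZ hi hGHZ_apply_000
  · exact embedOpen_mulVec_basisState_eq_zero hGHZ hi hGHZ_apply_111
  · exact embedOpen_mulVec_sum_domainWall_eq_zero hGHZ hGHZ_apply_000 hGHZ_apply_111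
      hGHZ_apply_011_add_apply_001 hi
  · exact embedOpen_mulVec_sum_domainWall_eq_zero hGHZ hGHZ_apply_111 hGHZ_apply_000
      hGHZ_apply_100_add_apply_110 hi

/-- on an open qubit chain of length `n ≥ 3` with
`H' = Σ_{i} h'_{i,i+1,i+2}`, the kernel of `H'` contains `|0⋯0⟩`, `|1⋯1⟩`, the zero-momentum
domain-wall state `Σ_{k=1}^{n-1} |0^k 1^{n-k}⟩`, and `Σ_{k=1}^{n-1} |1^k 0^{n-k}⟩`. -/
theorem stmt_14 (n : ℕ) (hn : 3 ≤ n) :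
    (∑ i ∈ Finset.range (n - 2), embedOpen (n := n) hGHZ i).mulVec
        (basisState (fun _ => (0 : Fin 2))) = 0 ∧
    (∑ i ∈ Finset.range (n - 2), embedOpen (n := n) hGHZ i).mulVec
        (basisState (fun _ => (1 : Fin 2))) = 0 ∧
    (∑ i ∈ Finset.range (n - 2), embedOpen (n := n) hGHZ i).mulVec
        (∑ k ∈ Finset.Ico 1 n,
          basisState (fun j => if (j : ℕ) < k then (0 : Fin 2) else 1)) = 0 ∧
    (∑ i ∈ Finset.range (n - 2), embedOpen (n := n) hGHZ i).mulVec
        (∑ k ∈ Finset.Ico 1 n,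
          basisState (fun j => if (j : ℕ) < k then (1 : Fin 2) else 0)) = 0 :=
  stmt_14_general n

end
end

section
/- Let E be a completely positive linear map on D×D complex matrices of the form E(X) = Σₖ Aₖ X Bₖ*, and suppose there exists a positive definite matrix Λ with Σₖ Aₖ* Λ Aₖ ≤ Λ and Σₖ Bₖ Λ' Bₖ* ≤ Λ' for a positive definite Λ' (normalization conditions of two injective MPS blocks), and that span{Aₖ} ∩ span{Bₖ} = {0} as subspaces of matrices with appropriate strictness as in the Cauchy–Schwarz argument. Then every eigenvalue λ of E satisfies |λ| < 1; i.e., the spectral radius of the off-diagonal transfer operator E^A_B is strictly less than 1. -/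
/-!
Let `X ≠ 0` satisfy `∑ₖ Bₖ X Aₖᴴ = λ X` and use the semi-inner product `⟪P, Q⟫ = tr (P Λ_A Qᴴ)`.
Expanding, `∑ₖ ‖X Aₖᴴ - λ Bₖᴴ X‖² = tr (X (∑ₖ Aₖᴴ Λ_A Aₖ) Xᴴ) - |λ|² ‖X‖²`, using `∑ₖ Bₖ Bₖᴴ = 1`
for the `Bₖᴴ X` terms and the eigenvalue equation for the cross terms. Since
`∑ₖ Aₖᴴ Λ_A Aₖ ≤ Λ_A`, the right side is at most `(1 - |λ|²) ‖X‖²`, so `|λ| ≥ 1` forces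
`X Aₖᴴ = λ Bₖᴴ X` for all `k`. Entrywise, the vector `k ↦ (Aₖ Xᴴ)ᵢⱼ` then lies in both physical
spans, hence vanishes; so `λ X = ∑ₖ Bₖ X Aₖᴴ = 0`, which is impossible for `|λ| ≥ 1`.
-/

open Matrix
open scoped ComplexOrder

namespace Matrix

section WeightedTrace
variable {n p 𝕜 : Type*} [Fintype n] [Fintype p] [RCLike 𝕜]

lemma PosSemidef.trace_mul_mul_conjTranspose_mono {C D : Matrix p p 𝕜}
    (hCD : (D - C).PosSemidef) (M : Matrix n p 𝕜) : (M * C * Mᴴ).trace ≤ (M * D * Mᴴ).trace := by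
  have h := (hCD.mul_mul_conjTranspose_same M).trace_nonneg
  rwa [Matrix.mul_sub, Matrix.sub_mul, trace_sub, sub_nonneg] at h

lemma PosDef.eq_zero_of_trace_mul_mul_conjTranspose_eq_zero {C : Matrix p p 𝕜} (hC : C.PosDef)
    {M : Matrix n p 𝕜} (h : (M * C * Mᴴ).trace = 0) : M = 0 := by
  rw [(hC.posSemidef.mul_mul_conjTranspose_same M).trace_eq_zero_iff, Matrix.mul_assoc] at h
  ext i a
  have hdiag : M i ⬝ᵥ C *ᵥ star (M i) = 0 := congrFun (congrFun h i) i
  by_contra hne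
  have hrow : star (M i) ≠ 0 := fun h0 => hne (by simpa using congrFun h0 a)
  exact (hC.dotProduct_mulVec_pos hrow).ne' (by rwa [star_star])

end WeightedTrace

section PhysicalSpan
variable {κ n p q R : Type*} [CommSemiring R]

def physicalSpan (A : κ → Matrix n p R) : Submodule R (κ → R) :=
  Submodule.span R {v | ∃ α β, v = fun k => A k α β}

lemma mul_apply_mem_physicalSpan [Fintype p] (A : κ → Matrix n p R) (N : Matrix p q R)
    (i : n) (j : q) : (fun k => (A k * N) i j) ∈ physicalSpan A := by
  have h : (fun k => (A k * N) i j) = ∑ β, N β j • fun k => A k i β := by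
    ext k; simp [mul_apply, mul_comm]
  rw [h]
  exact Submodule.sum_mem _ fun β _ =>
    Submodule.smul_mem _ _ (Submodule.subset_span ⟨i, β, rfl⟩)

lemma apply_mul_mem_physicalSpan [Fintype n] (N : Matrix q n R) (A : κ → Matrix n p R)
    (i : q) (j : p) : (fun k => (N * A k) i j) ∈ physicalSpan A := by
  have h : (fun k => (N * A k) i j) = ∑ α, N i α • fun k => A k α j := by
    ext k; simp [mul_apply]
  rw [h]
  exact Submodule.sum_mem _ fun α _ =>
    Submodule.smul_mem _ _ (Submodule.subset_span ⟨α, j, rfl⟩)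

lemma mul_eq_zero_of_mul_eq_smul_mul [Fintype n] [Fintype p] {A : κ → Matrix n n R}
    {B : κ → Matrix p p R} (hAB : physicalSpan A ⊓ physicalSpan B = ⊥) {N : Matrix n p R} {c : R}
    (hN : ∀ k, A k * N = c • (N * B k)) (k : κ) : A k * N = 0 := by
  ext i j
  have hmem : (fun k => (A k * N) i j) ∈ physicalSpan A ⊓ physicalSpan B := by
    refine ⟨mul_apply_mem_physicalSpan A N i j, ?_⟩
    have h : (fun k => (A k * N) i j) = c • fun k => (N * B k) i j := by
      ext k; simp [hN]
    rw [h]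
    exact Submodule.smul_mem _ _ (apply_mul_mem_physicalSpan N B i j)
  rw [hAB, Submodule.mem_bot] at hmem
  exact congrFun hmem k

end PhysicalSpan

section IntertwiningDefect
variable {κ n p R : Type*} [Fintype κ] [Fintype n] [Fintype p] [CommRing R] [StarRing R]

lemma trace_sub_smul_mul_mul_conjTranspose_sub_smul (P Q : Matrix n p R) (Λ : Matrix p p R)
    (c : R) :
    ((P - c • Q) * Λ * (P - c • Q)ᴴ).trace = (P * Λ * Pᴴ).trace - star c * (P * Λ * Qᴴ).trace
      - c * (Q * Λ * Pᴴ).trace + c * star c * (Q * Λ * Qᴴ).trace := by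
  simp only [conjTranspose_sub, conjTranspose_smul, Matrix.sub_mul, Matrix.mul_sub,
    Matrix.smul_mul, Matrix.mul_smul, trace_sub, trace_smul, smul_eq_mul]
  ring

variable [DecidableEq n] {A : κ → Matrix p p R} {B : κ → Matrix n n R} {X : Matrix n p R}
  {c : R}

lemma sum_trace_intertwining_defect (Λ : Matrix p p R) (hB : ∑ k, B k * (B k)ᴴ = 1)
    (heig : ∑ k, B k * X * (A k)ᴴ = c • X) :
    ∑ k, ((X * (A k)ᴴ - c • ((B k)ᴴ * X)) * Λ * (X * (A k)ᴴ - c • ((B k)ᴴ * X))ᴴ).trace =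
      (X * (∑ k, (A k)ᴴ * Λ * A k) * Xᴴ).trace - c * star c * (X * Λ * Xᴴ).trace := by
  -- the four Gram sums of `Y k = X * (A k)ᴴ` and `Z k = (B k)ᴴ * X`, then expand
  have hYY : ∑ k, (X * (A k)ᴴ * Λ * (X * (A k)ᴴ)ᴴ).trace =
      (X * (∑ k, (A k)ᴴ * Λ * A k) * Xᴴ).trace := by
    simp only [conjTranspose_mul, conjTranspose_conjTranspose, Matrix.mul_sum, Matrix.sum_mul,
      trace_sum, Matrix.mul_assoc]
  have hYZ : ∑ k, (X * (A k)ᴴ * Λ * ((B k)ᴴ * X)ᴴ).trace = c * (X * Λ * Xᴴ).trace := by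
    calc _ = ∑ k, (B k * X * (A k)ᴴ * (Λ * Xᴴ)).trace := by
          refine Finset.sum_congr rfl fun k _ => ?_
          simp only [conjTranspose_mul, conjTranspose_conjTranspose, Matrix.mul_assoc]
          rw [trace_mul_comm (B k)]
          simp only [Matrix.mul_assoc]
      _ = c * (X * Λ * Xᴴ).trace := by
          rw [← trace_sum, ← Matrix.sum_mul, heig, smul_mul, trace_smul, smul_eq_mul,
            Matrix.mul_assoc]
  have hZY :
      ∑ k, ((B k)ᴴ * X * Λ * (X * (A k)ᴴ)ᴴ).trace = star c * (X * Λ * Xᴴ).trace := by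
    calc _ = ∑ k, (X * Λ * (B k * X * (A k)ᴴ)ᴴ).trace := by
          refine Finset.sum_congr rfl fun k _ => ?_
          simp only [conjTranspose_mul, conjTranspose_conjTranspose, Matrix.mul_assoc]
          rw [trace_mul_comm (B k)ᴴ]
          simp only [Matrix.mul_assoc]
      _ = star c * (X * Λ * Xᴴ).trace := by
          rw [← trace_sum, ← Matrix.mul_sum, ← conjTranspose_sum, heig, conjTranspose_smul,
            Matrix.mul_smul, trace_smul, smul_eq_mul]
  have hZZ : ∑ k, ((B k)ᴴ * X * Λ * ((B k)ᴴ * X)ᴴ).trace = (X * Λ * Xᴴ).trace := by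
    calc _ = ∑ k, (X * Λ * Xᴴ * (B k * (B k)ᴴ)).trace := by
          refine Finset.sum_congr rfl fun k _ => ?_
          simp only [conjTranspose_mul, conjTranspose_conjTranspose, Matrix.mul_assoc]
          rw [trace_mul_comm (B k)ᴴ]
          simp only [Matrix.mul_assoc]
      _ = (X * Λ * Xᴴ).trace := by rw [← trace_sum, ← Matrix.mul_sum, hB, Matrix.mul_one]
  simp only [trace_sub_smul_mul_mul_conjTranspose_sub_smul, Finset.sum_add_distrib,
    Finset.sum_sub_distrib, ← Finset.mul_sum, hYY, hYZ, hZY, hZZ]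
  ring

end IntertwiningDefect

section Eigenvalue
variable {κ n p 𝕜 : Type*} [Fintype κ] [Fintype n] [Fintype p] [DecidableEq n] [RCLike 𝕜]
  {A : κ → Matrix p p 𝕜} {B : κ → Matrix n n 𝕜} {X : Matrix n p 𝕜} {c : 𝕜} {Λ : Matrix p p 𝕜}

lemma mul_conjTranspose_eq_smul_of_one_le_norm (hΛ : Λ.PosDef)
    (hΛfix : (Λ - ∑ k, (A k)ᴴ * Λ * A k).PosSemidef) (hB : ∑ k, B k * (B k)ᴴ = 1)
    (heig : ∑ k, B k * X * (A k)ᴴ = c • X) (hc : 1 ≤ ‖c‖) (k : κ) :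
    X * (A k)ᴴ = c • ((B k)ᴴ * X) := by
  set M := fun k => X * (A k)ᴴ - c • ((B k)ᴴ * X)
  have hM_nonneg : ∀ k, 0 ≤ (M k * Λ * (M k)ᴴ).trace := fun k =>
    (hΛ.posSemidef.mul_mul_conjTranspose_same (M k)).trace_nonneg
  have hsum_nonpos : ∑ k, (M k * Λ * (M k)ᴴ).trace ≤ 0 := by
    have hX := (hΛ.posSemidef.mul_mul_conjTranspose_same X).trace_nonneg
    have hnorm : (1 : 𝕜) ≤ c * star c := by
      rw [RCLike.star_def, RCLike.mul_conj]
      exact_mod_cast one_le_pow₀ hc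
    rw [sum_trace_intertwining_defect Λ hB heig, sub_nonpos]
    exact (hΛfix.trace_mul_mul_conjTranspose_mono X).trans (le_mul_of_one_le_left hX hnorm)
  have hMk : (M k * Λ * (M k)ᴴ).trace = 0 :=
    (Finset.sum_eq_zero_iff_of_nonneg fun k _ => hM_nonneg k).mp
      (hsum_nonpos.antisymm (Finset.sum_nonneg fun k _ => hM_nonneg k)) k (Finset.mem_univ k)
  exact sub_eq_zero.mp (hΛ.eq_zero_of_trace_mul_mul_conjTranspose_eq_zero hMk)

end Eigenvalue

end Matrix

theorem stmt_16_general {d l m : ℕ}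
    (A : Fin d → Matrix (Fin l) (Fin l) ℂ) (B : Fin d → Matrix (Fin m) (Fin m) ℂ)
    (hB1 : ∑ k, B k * (B k)ᴴ = 1)
    (ΛA : Matrix (Fin l) (Fin l) ℂ) (hΛA : ΛA.PosDef)
    (hΛAfix : (ΛA - ∑ k, (A k)ᴴ * ΛA * A k).PosSemidef)
    (hspan : Submodule.span ℂ {v : Fin d → ℂ | ∃ α β, v = fun k => A k α β} ⊓
        Submodule.span ℂ {v : Fin d → ℂ | ∃ α β, v = fun k => B k α β} = ⊥)
    (E : Module.End ℂ (Matrix (Fin m) (Fin l) ℂ))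
    (hE : ∀ X, E X = ∑ k, B k * X * (A k)ᴴ)
    (lam : ℂ) (hlam : Module.End.HasEigenvalue E lam) :
    ‖lam‖ < 1 := by
  obtain ⟨X, hX⟩ := hlam.exists_hasEigenvector
  have heig : ∑ k, B k * X * (A k)ᴴ = lam • X := by rw [← hE]; exact hX.apply_eq_smul
  by_contra! hlam1
  have hAX : ∀ k, A k * Xᴴ = 0 :=
    mul_eq_zero_of_mul_eq_smul_mul (c := star lam) hspan fun k => by
      simpa using congrArg conjTranspose
        (mul_conjTranspose_eq_smul_of_one_le_norm hΛA hΛAfix hB1 heig hlam1 k)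
  have hlamX : lam • X = 0 := by
    rw [← heig]
    refine Finset.sum_eq_zero fun k _ => ?_
    have hXA : X * (A k)ᴴ = 0 := by simpa using congrArg conjTranspose (hAX k)
    rw [Matrix.mul_assoc, hXA, Matrix.mul_zero]
  obtain rfl | rfl := smul_eq_zero.mp hlamX
  · norm_num at hlam1
  · exact hX.2 rfl

/-- Let `A`, `B` be the tensors of two injective MPS blocks in standard form
(`Σₖ Aₖ Aₖ* = 1`, `Σₖ Bₖ Bₖ* = 1`, with positive definite `Λ_A`, `Λ_B` satisfying
`Σₖ Aₖ* Λ_A Aₖ ≤ Λ_A` and `Σₖ Bₖ* Λ_B Bₖ ≤ Λ_B`), and suppose the physical spans of the two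
blocks intersect trivially.  Then every eigenvalue `λ` of the off-diagonal transfer operator
`E^A_B : X ↦ Σₖ Bₖ X Aₖ*` satisfies `|λ| < 1`. -/
theorem stmt_16 {d l m : ℕ}
    (A : Fin d → Matrix (Fin l) (Fin l) ℂ) (B : Fin d → Matrix (Fin m) (Fin m) ℂ)
    (hA1 : ∑ k, A k * (A k)ᴴ = 1) (hB1 : ∑ k, B k * (B k)ᴴ = 1)
    (ΛA : Matrix (Fin l) (Fin l) ℂ) (hΛA : ΛA.PosDef)
    (hΛAfix : (ΛA - ∑ k, (A k)ᴴ * ΛA * A k).PosSemidef)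
    (ΛB : Matrix (Fin m) (Fin m) ℂ) (hΛB : ΛB.PosDef)
    (hΛBfix : (ΛB - ∑ k, (B k)ᴴ * ΛB * B k).PosSemidef)
    (hspan : Submodule.span ℂ {v : Fin d → ℂ | ∃ α β, v = fun k => A k α β} ⊓
        Submodule.span ℂ {v : Fin d → ℂ | ∃ α β, v = fun k => B k α β} = ⊥)
    (E : Module.End ℂ (Matrix (Fin m) (Fin l) ℂ))
    (hE : ∀ X, E X = ∑ k, B k * X * (A k)ᴴ)
    (lam : ℂ) (hlam : Module.End.HasEigenvalue E lam) :
    ‖lam‖ < 1 :=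
  stmt_16_general A B hB1 ΛA hΛA hΛAfix hspan E hE lam hlam
end

section
/- On a periodic qubit chain of length N ≥ 3 consider H' = Σ_{i} h'_{i,i+1,i+2} with h' = I - |000⟩⟨000| - |W⟩⟨W| where |W⟩ = (|001⟩+|010⟩+|100⟩)/√3. Then the kernel of H' contains the two linearly independent states |0^N⟩ and |W_N⟩ = Σ_{j=1}^{N} |0⋯0 1^{(j)} 0⋯0⟩ (the W state with a single 1 at position j, summed over j). -/
/-!
Each local term `h'` annihilates `|000⟩` and the unnormalised W state `|100⟩ + |010⟩ + |001⟩`.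
On `|0^N⟩` every term sees `|000⟩` in its window. On `|W_N⟩ = Σⱼ |eⱼ⟩`, a term on the window
`i, i+1, i+2` kills the excitations outside the window (locally `|000⟩`), while the three inside
it agree off the window (there they are all `0`) and add up locally to the W state; this is where
`N ≥ 3` enters, making the three window sites distinct. `|0^N⟩` and `|W_N⟩` are independent
because `|W_N⟩ ≠ 0` vanishes at the all-zeros configuration.
-/

open Matrix

noncomputable section

/-- The three-qubit computational basis state `|t⟩`. -/
def ket (t : Fin 2 × Fin 2 × Fin 2) : Fin 2 × Fin 2 × Fin 2 → ℂ :=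
  fun p => if p = t then 1 else 0

/-- The W state `|W⟩ = (|001⟩ + |010⟩ + |100⟩)/√3`. -/
def vW : Fin 2 × Fin 2 × Fin 2 → ℂ :=
  fun p => (1 / (Real.sqrt 3 : ℂ)) * (ket (0, 0, 1) p + ket (0, 1, 0) p + ket (1, 0, 0) p)

/-- `h' = I - |000⟩⟨000| - |W⟩⟨W|`. -/
def hW : Matrix (Fin 2 × Fin 2 × Fin 2) (Fin 2 × Fin 2 × Fin 2) ℂ :=
  1 - proj (ket (0, 0, 0)) - proj vW

def sitePos {n : ℕ} (hn : 0 < n) (i : ℕ) : Fin n := ⟨i % n, Nat.mod_lt _ hn⟩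

/-- `h` acting on sites `i, i+1, i+2` (mod `n`) of a periodic qubit chain. -/
def embed3 {n : ℕ} (hn : 0 < n)
    (h : Matrix (Fin 2 × Fin 2 × Fin 2) (Fin 2 × Fin 2 × Fin 2) ℂ) (i : ℕ) :
    Matrix (Fin n → Fin 2) (Fin n → Fin 2) ℂ :=
  fun f g =>
    (if ∀ j : Fin n, j ≠ sitePos hn i → j ≠ sitePos hn (i + 1) → j ≠ sitePos hn (i + 2) →
        f j = g j then 1 else 0) *
    h (f (sitePos hn i), f (sitePos hn (i + 1)), f (sitePos hn (i + 2)))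
      (g (sitePos hn i), g (sitePos hn (i + 1)), g (sitePos hn (i + 2)))

/-- The W state of the chain: `|W_N⟩ = Σ_j |0⋯0 1^{(j)} 0⋯0⟩`. -/
def wChain (N : ℕ) : (Fin N → Fin 2) → ℂ :=
  ∑ j : Fin N, basisState (fun p => if p = j then (1 : Fin 2) else 0)

lemma hW_apply_zero (t : Fin 2 × Fin 2 × Fin 2) : hW t (0, 0, 0) = 0 := by
  simp [hW, proj, vecMulVec, Matrix.one_apply, ket, vW, Prod.ext_iff]

lemma hW_apply_W (t : Fin 2 × Fin 2 × Fin 2) :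
    hW t (1, 0, 0) + hW t (0, 1, 0) + hW t (0, 0, 1) = 0 := by
  have hsq : (Real.sqrt 3 : ℂ) ^ 2 = 3 := by
    exact_mod_cast Real.sq_sqrt (by norm_num : (0:ℝ) ≤ 3)
  fin_cases t <;> simp [hW, proj, vecMulVec_apply, ket, vW] <;> field_simp <;>
    linear_combination hsq

lemma mulVec_basisState {n : ℕ} (M : Matrix (Fin n → Fin 2) (Fin n → Fin 2) ℂ)
    (c : Fin n → Fin 2) : M *ᵥ basisState c = M.col c := by
  rw [← mulVec_single_one]
  congr 1
  ext f
  simp [basisState, Pi.single_apply]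

lemma sitePos_add_ne {n : ℕ} (hn : 0 < n) (i : ℕ) {k : ℕ} (hk0 : 0 < k) (hkn : k < n) :
    sitePos hn (i + k) ≠ sitePos hn i := by
  intro h
  have hmod : i + k ≡ i + 0 [MOD n] := congrArg Fin.val h
  have hk : n ∣ k := Nat.modEq_zero_iff_dvd.1 (hmod.add_left_cancel' i)
  exact hk0.ne' (Nat.eq_zero_of_dvd_of_lt hk hkn)

section Window

variable {n : ℕ} (hn : 0 < n) (i : ℕ)

def localConfig (f : Fin n → Fin 2) : Fin 2 × Fin 2 × Fin 2 :=
  (f (sitePos hn i), f (sitePos hn (i + 1)), f (sitePos hn (i + 2)))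

-- An `abbrev`, so that the `if` below finds the same decidability instance as `embed3`.
abbrev AgreeOffWindow (f g : Fin n → Fin 2) : Prop :=
  ∀ j : Fin n, j ≠ sitePos hn i → j ≠ sitePos hn (i + 1) → j ≠ sitePos hn (i + 2) → f j = g j

lemma embed3_apply (h : Matrix (Fin 2 × Fin 2 × Fin 2) (Fin 2 × Fin 2 × Fin 2) ℂ)
    (f g : Fin n → Fin 2) :
    embed3 hn h i f g =
      (if AgreeOffWindow hn i f g then 1 else 0) * h (localConfig hn i f) (localConfig hn i g) :=
  rfl

lemma embed3_eq_zero_of_col_eq_zero {h : Matrix (Fin 2 × Fin 2 × Fin 2) (Fin 2 × Fin 2 × Fin 2) ℂ}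
    {u : Fin 2 × Fin 2 × Fin 2} (hu : ∀ t, h t u = 0) (f : Fin n → Fin 2) {g : Fin n → Fin 2}
    (hg : localConfig hn i g = u) : embed3 hn h i f g = 0 := by
  rw [embed3_apply, hg, hu, mul_zero]

def excitation (j : Fin n) : Fin n → Fin 2 := fun p => if p = j then 1 else 0

lemma sum_embed3_excitation (hn3 : 3 ≤ n)
    {h : Matrix (Fin 2 × Fin 2 × Fin 2) (Fin 2 × Fin 2 × Fin 2) ℂ} (h0 : ∀ t, h t (0, 0, 0) = 0)
    (f : Fin n → Fin 2) :
    ∑ j, embed3 hn h i f (excitation j) =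
      (if AgreeOffWindow hn i f 0 then 1 else 0) *
        (h (localConfig hn i f) (1, 0, 0) + h (localConfig hn i f) (0, 1, 0) +
          h (localConfig hn i f) (0, 0, 1)) := by
  set s₀ := sitePos hn i
  set s₁ := sitePos hn (i + 1)
  set s₂ := sitePos hn (i + 2)
  have h10 : s₁ ≠ s₀ := sitePos_add_ne hn i one_pos (by omega)
  have h20 : s₂ ≠ s₀ := sitePos_add_ne hn i two_pos (by omega)
  have h21 : s₂ ≠ s₁ := sitePos_add_ne hn (i + 1) one_pos (by omega)
  have hout : ∀ j ∉ ({s₀, s₁, s₂} : Finset (Fin n)), embed3 hn h i f (excitation j) = 0 := by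
    intro j hj
    simp only [Finset.mem_insert, Finset.mem_singleton, not_or] at hj
    refine embed3_eq_zero_of_col_eq_zero hn i h0 f ?_
    simp [localConfig, excitation, s₀, s₁, s₂, Ne.symm hj.1, Ne.symm hj.2.1, Ne.symm hj.2.2]
  have hagree : ∀ s ∈ ({s₀, s₁, s₂} : Finset (Fin n)),
      AgreeOffWindow hn i f (excitation s) ↔ AgreeOffWindow hn i f 0 := by
    intro s hs
    simp only [Finset.mem_insert, Finset.mem_singleton] at hs
    refine forall_congr' fun j => imp_congr_right fun hj₀ => imp_congr_right fun hj₁ =>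
      imp_congr_right fun hj₂ => ?_
    have hjs : j ≠ s := by rcases hs with rfl | rfl | rfl <;> assumption
    simp [excitation, hjs]
  rw [← Finset.sum_subset (Finset.subset_univ _) fun j _ => hout j,
    Finset.sum_insert (by simp [h10.symm, h20.symm]), Finset.sum_insert (by simp [h21.symm]),
    Finset.sum_singleton]
  have hc₀ : localConfig hn i (excitation s₀) = (1, 0, 0) := by
    simp [localConfig, excitation, s₀, s₁, s₂, h10, h20]
  have hc₁ : localConfig hn i (excitation s₁) = (0, 1, 0) := by
    simp [localConfig, excitation, s₀, s₁, s₂, h10.symm, h21]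
  have hc₂ : localConfig hn i (excitation s₂) = (0, 0, 1) := by
    simp [localConfig, excitation, s₀, s₁, s₂, h20.symm, h21.symm]
  simp only [embed3_apply, hc₀, hc₁, hc₂, hagree s₀ (by simp), hagree s₁ (by simp),
    hagree s₂ (by simp)]
  ring

lemma excitation_injective : Function.Injective (excitation (n := n)) := by
  intro j k hjk
  simpa [excitation] using congrFun hjk j

lemma excitation_ne_zero (j : Fin n) : excitation j ≠ fun _ => 0 := by
  intro hj
  simpa [excitation] using congrFun hj j

lemma wChain_eq_sum_excitation (n : ℕ) : wChain n = ∑ j, basisState (excitation j) := rfl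

lemma wChain_apply (g : Fin n → Fin 2) : wChain n g = ∑ j, if g = excitation j then 1 else 0 := by
  simp [wChain_eq_sum_excitation, basisState]

lemma wChain_apply_excitation (j : Fin n) : wChain n (excitation j) = 1 := by
  simp [wChain_apply, excitation_injective.eq_iff]

lemma wChain_apply_zero : wChain n (fun _ => 0) = 0 := by
  simp [wChain_apply, (excitation_ne_zero _).symm]

end Window

/-- on a periodic qubit chain of length `N ≥ 3` with
`H' = Σᵢ (I - |000⟩⟨000| - |W⟩⟨W|)_{i,i+1,i+2}`, the kernel of `H'` contains the two linearly
independent states `|0^N⟩` and `|W_N⟩`. -/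
theorem stmt_19 (N : ℕ) (hN : 3 ≤ N) :
    (∑ i ∈ Finset.range N, embed3 (show 0 < N by omega) hW i).mulVec
        (basisState (fun _ => (0 : Fin 2))) = 0 ∧
    (∑ i ∈ Finset.range N, embed3 (show 0 < N by omega) hW i).mulVec (wChain N) = 0 ∧
    LinearIndependent ℂ ![basisState (fun _ => (0 : Fin 2)), wChain N] := by
  have hN₀ : 0 < N := by omega
  refine ⟨?_, ?_, ?_⟩
  · refine (sum_mulVec _ _ _).trans (Finset.sum_eq_zero fun i _ => ?_)
    ext f
    rw [mulVec_basisState]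
    exact embed3_eq_zero_of_col_eq_zero hN₀ i hW_apply_zero f rfl
  · refine (sum_mulVec _ _ _).trans (Finset.sum_eq_zero fun i _ => ?_)
    ext f
    simp only [wChain_eq_sum_excitation, mulVec_sum, mulVec_basisState, Finset.sum_apply, col_apply,
      sum_embed3_excitation hN₀ i hN hW_apply_zero, hW_apply_W, mul_zero, Pi.zero_apply]
  · refine linearIndependent_fin2.2 ⟨fun hzero => ?_, fun a ha => ?_⟩
    · simpa [wChain_apply_excitation] using congrFun hzero (excitation ⟨0, hN₀⟩)
    · simpa [wChain_apply_zero, basisState] using congrFun ha fun _ => 0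

end
end
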